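/- Suppose g_i(x) = x for every user i. Then every constrained strong equilibrium α satisfies Σ_{i=1}^N α_i = C_N, and moreover C_N = max_{β ∈ 𝒞} Σ_{i=1}^N β_i; hence the strong price of anarchy of the constrained rate allocation game equals 1 (the worst strong equilibrium achieves the social optimum). -/

import Mathlib

/-!
Since `log` is concave, the capacity `Ω ↦ log (1 + (∑ i ∈ Ω, P i * h i) / σ²)` is submodular,
so the sets on which a feasible rate profile `α` is tight are closed under union. If
`∑ i, α i < C_N`, the union of all tight sets is therefore a proper subset of the users, and a
user outside it lies in no tight set: she alone can raise her rate and stay feasible, so `α` is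
not even a Nash equilibrium. Applied to a maximiser of `∑ i, β i` on the compact region `𝒞`,
the same argument shows that the optimum equals `C_N`.
-/

open scoped Classical

open Finset

section Polymatroid

variable {ι : Type*}

def polymatroid (ρ : Finset ι → ℝ) : Set (ι → ℝ) :=
  {α | (∀ i, 0 ≤ α i) ∧ ∀ Ω : Finset ι, Ω.Nonempty → ∑ i ∈ Ω, α i ≤ ρ Ω}

def IsSubmodular [DecidableEq ι] (ρ : Finset ι → ℝ) : Prop :=
  ∀ A B, ρ (A ∪ B) + ρ (A ∩ B) ≤ ρ A + ρ B

variable {ρ : Finset ι → ℝ} {α : ι → ℝ}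

lemma sum_le_of_mem_polymatroid (hρ₀ : ρ ∅ = 0) (hα : α ∈ polymatroid ρ) (Ω : Finset ι) :
    ∑ i ∈ Ω, α i ≤ ρ Ω := by
  rcases Ω.eq_empty_or_nonempty with rfl | hΩ
  · simp [hρ₀]
  · exact hα.2 Ω hΩ

lemma isClosed_polymatroid (ρ : Finset ι → ℝ) : IsClosed (polymatroid ρ) := by
  simp only [polymatroid, Set.ofPred_and, Set.ofPred_forall]
  exact (isClosed_iInter fun i => isClosed_le continuous_const (continuous_apply i)).inter
    (isClosed_iInter fun Ω => isClosed_iInter fun _ =>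
      isClosed_le (continuous_finsetSum _ fun i _ => continuous_apply i) continuous_const)

lemma isCompact_polymatroid (ρ : Finset ι → ℝ) : IsCompact (polymatroid ρ) := by
  refine (isCompact_univ_pi fun i => isCompact_Icc (a := 0) (b := ρ {i})).of_isClosed_subset
    (isClosed_polymatroid ρ) fun α hα i _ => ⟨hα.1 i, ?_⟩
  simpa using hα.2 {i} (singleton_nonempty i)

variable [DecidableEq ι]

lemma sum_union_eq_of_sum_eq (hρ₀ : ρ ∅ = 0) (hρ : IsSubmodular ρ) (hα : α ∈ polymatroid ρ)
    {A B : Finset ι} (hA : ∑ i ∈ A, α i = ρ A) (hB : ∑ i ∈ B, α i = ρ B) :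
    ∑ i ∈ A ∪ B, α i = ρ (A ∪ B) := by
  have := sum_le_of_mem_polymatroid hρ₀ hα (A ∩ B)
  have := sum_le_of_mem_polymatroid hρ₀ hα (A ∪ B)
  linarith [hρ A B, sum_union_inter (s₁ := A) (s₂ := B) (f := α)]

variable [Fintype ι]

lemma exists_forall_sum_lt_of_sum_lt (hρ₀ : ρ ∅ = 0) (hρ : IsSubmodular ρ)
    (hα : α ∈ polymatroid ρ) (hlt : ∑ i, α i < ρ univ) :
    ∃ i, ∀ Ω, i ∈ Ω → ∑ j ∈ Ω, α j < ρ Ω := by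
  by_contra! htight
  choose T hiT hT using htight
  have hsupT_tight : (univ.sup T).sum α = ρ (univ.sup T) :=
    sup_induction (p := fun Ω => Ω.sum α = ρ Ω) (by simp [hρ₀])
      (fun _ hA _ hB => sum_union_eq_of_sum_eq hρ₀ hρ hα hA hB)
      (fun i _ => le_antisymm (sum_le_of_mem_polymatroid hρ₀ hα _) (hT i))
  have hTuniv : univ.sup T = univ := eq_univ_of_forall fun i => mem_sup.2 ⟨i, mem_univ i, hiT i⟩
  rw [hTuniv] at hsupT_tight
  exact hlt.ne hsupT_tight

lemma exists_add_single_mem_polymatroid (hα : α ∈ polymatroid ρ) {i : ι}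
    (hi : ∀ Ω, i ∈ Ω → ∑ j ∈ Ω, α j < ρ Ω) :
    ∃ ε > 0, α + Pi.single i ε ∈ polymatroid ρ := by
  obtain ⟨Ω₀, hΩ₀, hmin⟩ := exists_min_image (univ.filter (i ∈ ·)) (fun Ω => ρ Ω - ∑ j ∈ Ω, α j)
    ⟨{i}, by simp⟩
  refine ⟨ρ Ω₀ - ∑ j ∈ Ω₀, α j, sub_pos.2 (hi Ω₀ (mem_filter.1 hΩ₀).2), ?_, fun Ω hΩ => ?_⟩
  · intro k
    have := hi Ω₀ (mem_filter.1 hΩ₀).2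
    rw [Pi.add_apply, Pi.single_apply]
    split_ifs <;> linarith [hα.1 k]
  · simp only [Pi.add_apply, sum_add_distrib, sum_pi_single']
    split_ifs with hiΩ
    · linarith [hmin Ω (mem_filter.2 ⟨mem_univ Ω, hiΩ⟩)]
    · simpa using hα.2 Ω hΩ

theorem sum_eq_of_forall_add_single_notMem (hρ₀ : ρ ∅ = 0) (hρ : IsSubmodular ρ)
    (hα : α ∈ polymatroid ρ) (hmax : ∀ i, ∀ ε > 0, α + Pi.single i ε ∉ polymatroid ρ) :
    ∑ i, α i = ρ univ := by
  refine (sum_le_of_mem_polymatroid hρ₀ hα univ).eq_or_lt.resolve_right fun hlt => ?_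
  obtain ⟨i, hi⟩ := exists_forall_sum_lt_of_sum_lt hρ₀ hρ hα hlt
  obtain ⟨ε, hε, hmem⟩ := exists_add_single_mem_polymatroid hα hi
  exact hmax i ε hε hmem

theorem exists_mem_polymatroid_sum_eq (hρ₀ : ρ ∅ = 0) (hρ : IsSubmodular ρ)
    (hρ_nonneg : ∀ Ω, 0 ≤ ρ Ω) : ∃ β ∈ polymatroid ρ, ∑ i, β i = ρ univ := by
  have h0 : (0 : ι → ℝ) ∈ polymatroid ρ := ⟨fun _ => le_rfl, fun Ω _ => by simp [hρ_nonneg]⟩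
  obtain ⟨β, hβ, hmax⟩ := (isCompact_polymatroid ρ).exists_isMaxOn ⟨0, h0⟩
    (f := fun β => ∑ i, β i)
    (continuous_finsetSum _ fun i _ => continuous_apply i).continuousOn
  refine ⟨β, hβ, sum_eq_of_forall_add_single_notMem hρ₀ hρ hβ fun i ε hε hmem => ?_⟩
  have : ∑ j, (β + Pi.single i ε : ι → ℝ) j ≤ ∑ j, β j := hmax hmem
  simp only [Pi.add_apply, sum_add_distrib, sum_pi_single', if_pos (mem_univ i)] at this
  linarith

end Polymatroid

section Capacity

lemma log_one_add_div_add_add_le {c X Y w : ℝ} (hc : 0 < c) (hY : 0 ≤ Y) (hYX : Y ≤ X)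
    (hw : 0 ≤ w) :
    Real.log (1 + (X + w) / c) + Real.log (1 + Y / c) ≤
      Real.log (1 + X / c) + Real.log (1 + (Y + w) / c) := by
  have hX : 0 ≤ X := hY.trans hYX
  have one_add_div : ∀ Z, 1 + Z / c = (c + Z) / c := fun Z => by field_simp
  rw [← Real.log_mul (by positivity) (by positivity),
    ← Real.log_mul (by positivity) (by positivity)]
  refine Real.log_le_log (by positivity) ?_
  rw [one_add_div, one_add_div, one_add_div, one_add_div, div_mul_div_comm, div_mul_div_comm,
    div_le_div_iff_of_pos_right (by positivity)]
  nlinarith [mul_nonneg hw (sub_nonneg.2 hYX)]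

lemma isSubmodular_log_one_add_sum_div {ι : Type*} [DecidableEq ι] {w : ι → ℝ}
    (hw : ∀ i, 0 ≤ w i) {c : ℝ} (hc : 0 < c) :
    IsSubmodular fun Ω => Real.log (1 + (∑ i ∈ Ω, w i) / c) := by
  intro A B
  have hinter : ∑ i ∈ A ∩ B, w i ≤ ∑ i ∈ A, w i :=
    sum_le_sum_of_subset_of_nonneg inter_subset_left fun i _ _ => hw i
  have hunion : ∑ i ∈ A ∪ B, w i = ∑ i ∈ A, w i + (∑ i ∈ B, w i - ∑ i ∈ A ∩ B, w i) := by
    linarith [sum_union_inter (s₁ := A) (s₂ := B) (f := w)]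
  have hdiff : 0 ≤ ∑ i ∈ B, w i - ∑ i ∈ A ∩ B, w i :=
    sub_nonneg.2 (sum_le_sum_of_subset_of_nonneg inter_subset_right fun i _ _ => hw i)
  simpa only [hunion, add_sub_cancel] using
    log_one_add_div_add_add_le hc (sum_nonneg fun i _ => hw i) hinter hdiff

end Capacity

theorem strong_price_of_anarchy_one_general
    (N : ℕ)
    (P h : Fin N → ℝ) (σ2 : ℝ)
    (hP : ∀ i, 0 < P i) (hh : ∀ i, 0 < h i) (hσ : 0 < σ2)
    (C : Finset (Fin N) → ℝ)
    (hC : ∀ Ω : Finset (Fin N), C Ω = Real.log (1 + (∑ i ∈ Ω, P i * h i) / σ2))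
    (𝒞 : Set (Fin N → ℝ))
    (h𝒞 : ∀ α, α ∈ 𝒞 ↔ ((∀ i, 0 ≤ α i) ∧
      ∀ Ω : Finset (Fin N), Ω.Nonempty → ∑ i ∈ Ω, α i ≤ C Ω))
    (u : Fin N → (Fin N → ℝ) → ℝ)
    (hu : ∀ i α, u i α = if α ∈ 𝒞 then α i else 0) :
    (∀ α ∈ 𝒞,
      (∀ D : Finset (Fin N), D.Nonempty →
        ∀ α' ∈ 𝒞, (∀ k ∉ D, α' k = α k) → ∃ i ∈ D, u i α' ≤ u i α) →
      ∑ i, α i = C Finset.univ) ∧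
    (∀ β ∈ 𝒞, ∑ i, β i ≤ C Finset.univ) ∧
    (∃ β ∈ 𝒞, ∑ i, β i = C Finset.univ) := by
  obtain rfl : 𝒞 = polymatroid C := Set.ext h𝒞
  have hPh (i : Fin N) : 0 ≤ P i * h i := (mul_pos (hP i) (hh i)).le
  have hC₀ : C ∅ = 0 := by simp [hC]
  have hC_nonneg (Ω : Finset (Fin N)) : 0 ≤ C Ω := by
    rw [hC]
    exact Real.log_nonneg (le_add_of_nonneg_right (div_nonneg (sum_nonneg fun i _ => hPh i) hσ.le))
  have hC_sub : IsSubmodular C := funext hC ▸ isSubmodular_log_one_add_sum_div hPh hσ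
  refine ⟨fun α hα hstrong => ?_, fun β hβ => sum_le_of_mem_polymatroid hC₀ hβ univ,
    exists_mem_polymatroid_sum_eq hC₀ hC_sub hC_nonneg⟩
  refine sum_eq_of_forall_add_single_notMem hC₀ hC_sub hα fun i ε hε hmem => ?_
  obtain ⟨j, hj, hgain⟩ := hstrong {i} (singleton_nonempty i) _ hmem fun k hk => by
    simp [mem_singleton.not.1 hk]
  rw [mem_singleton.1 hj, hu, hu, if_pos hmem, if_pos hα] at hgain
  simp only [Pi.add_apply, Pi.single_eq_same] at hgain
  linarith

/-- with identity utilities, every constrained strong equilibrium fills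
the total capacity C_N, and C_N is the social optimum over 𝒞; hence the strong
price of anarchy equals 1. -/
theorem strong_price_of_anarchy_one
    (N : ℕ) (hN : 2 ≤ N)
    (P h : Fin N → ℝ) (σ2 : ℝ)
    (hP : ∀ i, 0 < P i) (hh : ∀ i, 0 < h i) (hσ : 0 < σ2)
    (C : Finset (Fin N) → ℝ)
    (hC : ∀ Ω : Finset (Fin N), C Ω = Real.log (1 + (∑ i ∈ Ω, P i * h i) / σ2))
    (𝒞 : Set (Fin N → ℝ))
    (h𝒞 : ∀ α, α ∈ 𝒞 ↔ ((∀ i, 0 ≤ α i) ∧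
      ∀ Ω : Finset (Fin N), Ω.Nonempty → ∑ i ∈ Ω, α i ≤ C Ω))
    (u : Fin N → (Fin N → ℝ) → ℝ)
    (hu : ∀ i α, u i α = if α ∈ 𝒞 then α i else 0) :
    (∀ α ∈ 𝒞,
      (∀ D : Finset (Fin N), D.Nonempty →
        ∀ α' ∈ 𝒞, (∀ k ∉ D, α' k = α k) → ∃ i ∈ D, u i α' ≤ u i α) →
      ∑ i, α i = C Finset.univ) ∧
    (∀ β ∈ 𝒞, ∑ i, β i ≤ C Finset.univ) ∧
    (∃ β ∈ 𝒞, ∑ i, β i = C Finset.univ) :=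
  strong_price_of_anarchy_one_general N P h σ2 hP hh hσ C hC 𝒞 h𝒞 u hu
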